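/- arXiv:2509.01485 — 4 statements merged into one kernel-verified Lean document; each statement's English description precedes it below -/
import Mathlib

section
/- If 0 ≤ α < 1 and β ≥ 2, then the alpha-beta transformation T_{α,β} is transitive, i.e., there exists x ∈ [0,1] such that {T_{α,β}^n(x) : n ≥ 0} is dense in [0,1]. -/
/-!
Write `F x = fract (β x + α)`; on `[0, 1)` the map `T` is `F`, and `F` maps into `[0, 1)`.
The heart of the proof is that every interval contains a subinterval that some iterate `F^[n]`
maps affinely onto `[0, 1)`. For `β = 2` this holds because `F^[n] x = fract (2^n x + c)`.
For `β > 2`, cutting the affine image of an interval at the discontinuities of `F` leaves either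
a whole branch of `F` or an affine piece at least half as long, whose image under `F` is longer by
the factor `β / 2`; as the lengths stay below `1`, a whole branch is reached after finitely many
steps. Pulling a target interval back through such a subinterval shows that the points whose orbit
robustly enters a given open set form a dense open set, and Baire's theorem produces a point
whose orbit enters every open set meeting `(0, 1)`.
-/

open Filter Set TopologicalSpace

theorem Set.EqOn.iterate {X : Type*} {f g : X → X} {s : Set X} (h : EqOn f g s)
    (hg : MapsTo g s s) (n : ℕ) : EqOn f^[n] g^[n] s := by
  induction n with
  | zero => exact fun _ _ => rfl
  | succ n ih =>
    intro x hx
    rw [Function.iterate_succ_apply', Function.iterate_succ_apply', ih hx, h (hg.iterate n hx)]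

theorem exists_dense_orbit_of_interior_preimage {X : Type*} [TopologicalSpace X] [BaireSpace X]
    [SecondCountableTopology X] {f : X → X} {S : Set X} (hSo : IsOpen S) (hSne : S.Nonempty)
    (h : ∀ U V, IsOpen U → IsOpen V → (U ∩ S).Nonempty → (V ∩ S).Nonempty →
      ∃ n, (U ∩ interior (f^[n] ⁻¹' V)).Nonempty) :
    ∃ x ∈ S, S ⊆ closure (range fun n => f^[n] x) := by
  set I := {V ∈ countableBasis X | (V ∩ S).Nonempty}
  set G : Set X → Set X := fun V => (⋃ n, interior (f^[n] ⁻¹' V)) ∪ (closure S)ᶜ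
  have hG_open : ∀ V ∈ I, IsOpen (G V) := fun V _ =>
    (isOpen_iUnion fun _ => isOpen_interior).union isClosed_closure.isOpen_compl
  have hG_dense : ∀ V ∈ I, Dense (G V) := by
    rintro V ⟨hVB, hVS⟩
    refine dense_iff_inter_open.2 fun U hU ⟨y, hyU⟩ => ?_
    by_cases hyS : y ∈ closure S
    · obtain ⟨n, x, hxU, hx⟩ := h U V hU (isOpen_of_mem_countableBasis hVB)
        (mem_closure_iff.1 hyS U hU hyU) hVS
      exact ⟨x, hxU, .inl (mem_iUnion.2 ⟨n, hx⟩)⟩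
    · exact ⟨y, hyU, .inr hyS⟩
  obtain ⟨x, hxS, hxG⟩ := (dense_biInter_of_isOpen hG_open
    ((countable_countableBasis X).mono (sep_subset _ _)) hG_dense).inter_open_nonempty
    S hSo hSne
  refine ⟨x, hxS, fun y hyS => mem_closure_iff.2 fun o ho hyo => ?_⟩
  obtain ⟨V, hVB, hyV, hVo⟩ := (isBasis_countableBasis X).exists_subset_of_mem_open
    (mem_inter hyo hyS) (ho.inter hSo)
  rcases mem_iInter₂.1 hxG V ⟨hVB, y, hyV, (hVo hyV).2⟩ with hx | hx
  · obtain ⟨n, hn⟩ := mem_iUnion.1 hx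
    exact ⟨f^[n] x, (hVo (interior_subset (s := f^[n] ⁻¹' V) hn)).1, n, rfl⟩
  · exact absurd (subset_closure hxS) hx

namespace Paper

def AffineOnto (g : ℝ → ℝ) (w z A B : ℝ) : Prop :=
  ∀ x ∈ Ico w z, g x = A + (B - A) / (z - w) * (x - w)

namespace AffineOnto

variable {g h : ℝ → ℝ} {w z A B C D : ℝ}

theorem mapsTo (hg : AffineOnto g w z A B) (hwz : w < z) (hAB : A < B) :
    MapsTo g (Ico w z) (Ico A B) := by
  intro x hx
  have hr : 0 < (B - A) / (z - w) := div_pos (by linarith) (by linarith)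
  have hlt : (B - A) / (z - w) * (x - w) < B - A := by
    rw [div_mul_eq_mul_div, div_lt_iff₀ (by linarith)]
    nlinarith [hx.2]
  rw [hg x hx]
  exact ⟨by nlinarith [hx.1], by linarith⟩

theorem comp (hg : AffineOnto g w z A B) (hh : AffineOnto h A B C D) (hwz : w < z) (hAB : A < B) :
    AffineOnto (h ∘ g) w z C D := by
  intro x hx
  rw [Function.comp_apply, hh _ (hg.mapsTo hwz hAB hx), hg x hx]
  field_simp [sub_ne_zero.2 hAB.ne', sub_ne_zero.2 hwz.ne']
  ring

theorem exists_restrict (hg : AffineOnto g w z A B) (hwz : w < z) (hAB : A < B) {A' B' : ℝ}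
    (hA : A ≤ A') (hA'B' : A' < B') (hB : B' ≤ B) :
    ∃ w' z', w ≤ w' ∧ w' < z' ∧ z' ≤ z ∧ AffineOnto g w' z' A' B' := by
  obtain ⟨r, hr, hrB⟩ : ∃ r, 0 < r ∧ (B - A) * r = z - w :=
    ⟨(z - w) / (B - A), div_pos (by linarith) (by linarith), by field_simp [sub_ne_zero.2 hAB.ne']⟩
  refine ⟨w + (A' - A) * r, w + (B' - A) * r, by nlinarith, by nlinarith, by nlinarith, ?_⟩
  intro x hx
  have hslope : (B - A) / (z - w) = 1 / r := by
    rw [← hrB]; field_simp [sub_ne_zero.2 hAB.ne']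
  rw [hg x ⟨by nlinarith [hx.1], by nlinarith [hx.2]⟩, hslope,
    show w + (B' - A) * r - (w + (A' - A) * r) = (B' - A') * r by ring]
  field_simp [sub_ne_zero.2 hA'B'.ne']
  ring

theorem continuousAt (hg : AffineOnto g w z A B) {x : ℝ} (hx : x ∈ Ioo w z) : ContinuousAt g x :=
  (continuousAt_const.add (continuousAt_const.mul (continuousAt_id.sub continuousAt_const))).congr
    (eventually_of_mem (Ioo_mem_nhds hx.1 hx.2) fun y hy => (hg y (Ioo_subset_Ico_self hy)).symm)

end AffineOnto

noncomputable def alphaBetaMap (α β x : ℝ) : ℝ := Int.fract (β * x + α)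

section

variable {α β : ℝ}

theorem alphaBetaMap_mem_Ico (x : ℝ) : alphaBetaMap α β x ∈ Ico 0 1 :=
  ⟨Int.fract_nonneg _, Int.fract_lt_one _⟩

theorem alphaBetaMap_eq_of_mem_branch (hβ : 0 < β) {k : ℤ} {y : ℝ}
    (hy : y ∈ Ico ((k - α) / β) ((k + 1 - α) / β)) : alphaBetaMap α β y = β * y + α - k := by
  have h1 : k - α ≤ y * β := (div_le_iff₀ hβ).1 hy.1
  have h2 : y * β < k + 1 - α := (lt_div_iff₀ hβ).1 hy.2
  rw [alphaBetaMap, Int.fract, Int.floor_eq_iff.2 ⟨by linarith, by linarith⟩]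

theorem affineOnto_alphaBetaMap_of_subset_branch (hβ : 0 < β) {k : ℤ} {A B : ℝ}
    (hA : (k - α) / β ≤ A) (hAB : A < B) (hB : B ≤ (k + 1 - α) / β) :
    AffineOnto (alphaBetaMap α β) A B (β * A + α - k) (β * B + α - k) := by
  intro x hx
  rw [alphaBetaMap_eq_of_mem_branch hβ ⟨hA.trans hx.1, hx.2.trans_le hB⟩]
  field_simp [sub_ne_zero.2 hAB.ne']
  ring

theorem exists_affineOnto_alphaBetaMap (hβ : 0 < β) {A B : ℝ} (hAB : A < B) :
    ∃ A' B' C D, A ≤ A' ∧ A' < B' ∧ B' ≤ B ∧ 0 ≤ C ∧ C < D ∧ D ≤ 1 ∧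
      AffineOnto (alphaBetaMap α β) A' B' C D ∧ (β / 2 * (B - A) ≤ D - C ∨ C = 0 ∧ D = 1) := by
  have piece : ∀ (j : ℤ) A' B', A ≤ A' → A' < B' → B' ≤ B → (j - α) / β ≤ A' →
      B' ≤ (j + 1 - α) / β → B - A ≤ 2 * (B' - A') → ∃ A' B' C D, A ≤ A' ∧ A' < B' ∧ B' ≤ B ∧
        0 ≤ C ∧ C < D ∧ D ≤ 1 ∧ AffineOnto (alphaBetaMap α β) A' B' C D ∧
        (β / 2 * (B - A) ≤ D - C ∨ C = 0 ∧ D = 1) := by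
    intro j A' B' hA hA'B' hB hjA hjB hlen
    have h1 : j - α ≤ A' * β := (div_le_iff₀ hβ).1 hjA
    have h2 : B' * β ≤ j + 1 - α := (le_div_iff₀ hβ).1 hjB
    exact ⟨A', B', _, _, hA, hA'B', hB, by linarith, by nlinarith, by linarith,
      affineOnto_alphaBetaMap_of_subset_branch hβ hjA hA'B' hjB, .inl (by nlinarith)⟩
  set k := ⌊β * A + α⌋
  have hk : (k - α) / β ≤ A := (div_le_iff₀ hβ).2 (by linarith [Int.floor_le (β * A + α)])
  -- `s` and `s'` are the next two discontinuities of the map to the right of `A`.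
  set s := (k + 1 - α) / β
  have hAs : A < s := (lt_div_iff₀ hβ).2 (by linarith [Int.lt_floor_add_one (β * A + α)])
  have hs : ((k + 1 : ℤ) - α) / β = s := by push_cast; rfl
  rcases le_or_gt B s with hBs | hsB
  · exact piece k A B le_rfl hAB le_rfl hk hBs (by linarith)
  rcases le_or_gt (B - A) (2 * (s - A)) with hleft | hright
  · exact piece k A s le_rfl hAs hsB.le hk le_rfl hleft
  set s' := (k + 2 - α) / β
  have hs' : ((k + 1 : ℤ) + 1 - α) / β = s' := by simp only [s']; push_cast; ring
  rcases le_or_gt B s' with hBs' | hs'B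
  · exact piece (k + 1) s B hAs.le hsB le_rfl hs.le (hBs'.trans hs'.ge) (by linarith)
  · have hss' : s < s' := (div_lt_div_iff_of_pos_right hβ).2 (by linarith)
    have hfull := affineOnto_alphaBetaMap_of_subset_branch (α := α) hβ hs.le hss' hs'.ge
    have h0 : β * s + α - ((k + 1 : ℤ) : ℝ) = 0 := by simp only [s]; push_cast; field_simp; ring
    have h1 : β * s' + α - ((k + 1 : ℤ) : ℝ) = 1 := by simp only [s']; push_cast; field_simp; ring
    rw [h0, h1] at hfull
    exact ⟨s, s', 0, 1, hAs.le, hss', hs'B.le, le_rfl, one_pos, le_rfl, hfull, .inr ⟨rfl, rfl⟩⟩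

theorem exists_affineOnto_iterate_succ (hβ : 0 < β) {n : ℕ} {w z A B : ℝ}
    (h : AffineOnto (alphaBetaMap α β)^[n] w z A B) (hwz : w < z) (hAB : A < B) :
    ∃ w' z' C D, w ≤ w' ∧ w' < z' ∧ z' ≤ z ∧ 0 ≤ C ∧ C < D ∧ D ≤ 1 ∧
      AffineOnto (alphaBetaMap α β)^[n + 1] w' z' C D ∧
      (β / 2 * (B - A) ≤ D - C ∨ C = 0 ∧ D = 1) := by
  obtain ⟨A', B', C, D, hA, hA'B', hB, hC, hCD, hD, hF, hgrow⟩ :=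
    exists_affineOnto_alphaBetaMap (α := α) hβ hAB
  obtain ⟨w', z', hw, hw'z', hz, h'⟩ := h.exists_restrict hwz hAB hA hA'B' hB
  refine ⟨w', z', C, D, hw, hw'z', hz, hC, hCD, hD, ?_, hgrow⟩
  rw [Function.iterate_succ']
  exact h'.comp hF hw'z' hA'B'

theorem exists_affineOnto_iterate_of_two_lt (hβ : 2 < β) {u v : ℝ} (hu : 0 ≤ u) (huv : u < v)
    (hv : v ≤ 1) : ∃ n w z, u ≤ w ∧ w < z ∧ z ≤ v ∧ AffineOnto (alphaBetaMap α β)^[n] w z 0 1 := by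
  by_contra! hfull
  have grow : ∀ k : ℕ, ∃ n w z C D, u ≤ w ∧ w < z ∧ z ≤ v ∧ 0 ≤ C ∧ C < D ∧ D ≤ 1 ∧
      AffineOnto (alphaBetaMap α β)^[n] w z C D ∧ (β / 2) ^ k * (v - u) ≤ D - C := by
    intro k
    induction k with
    | zero =>
      refine ⟨0, u, v, u, v, le_rfl, huv, le_rfl, hu, huv, hv, fun x _ => ?_, by simp⟩
      field_simp [sub_ne_zero.2 huv.ne']
      simp
    | succ k ih =>
      obtain ⟨n, w, z, C, D, hw, hwz, hz, -, hCD, -, h, hlen⟩ := ih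
      obtain ⟨w', z', C', D', hw', hw'z', hz', hC', hC'D', hD', h', hgrow⟩ :=
        exists_affineOnto_iterate_succ (by linarith) h hwz hCD
      rcases hgrow with hgrow | ⟨rfl, rfl⟩
      · refine ⟨n + 1, w', z', C', D', hw.trans hw', hw'z', hz'.trans hz, hC', hC'D', hD', h', ?_⟩
        rw [pow_succ']
        calc β / 2 * (β / 2) ^ k * (v - u) ≤ β / 2 * (D - C) := by
              rw [mul_assoc]; exact mul_le_mul_of_nonneg_left hlen (by linarith)
          _ ≤ D' - C' := hgrow
      · exact absurd h' (hfull _ _ _ (hw.trans hw') hw'z' (hz'.trans hz))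
  obtain ⟨k, hk⟩ := pow_unbounded_of_one_lt (1 / (v - u)) (by linarith : (1 : ℝ) < β / 2)
  obtain ⟨n, w, z, C, D, -, -, -, hC, -, hD, -, hlen⟩ := grow k
  rw [div_lt_iff₀ (by linarith)] at hk
  linarith

theorem exists_iterate_alphaBetaMap_natCast_eq_fract (m : ℕ) (n : ℕ) :
    ∃ c : ℝ, ∀ x ∈ Ico (0 : ℝ) 1, (alphaBetaMap α m)^[n] x = Int.fract ((m : ℝ) ^ n * x + c) := by
  induction n with
  | zero => exact ⟨0, fun x hx => by simpa using (Int.fract_eq_self.2 hx).symm⟩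
  | succ n ih =>
    obtain ⟨c, hc⟩ := ih
    refine ⟨m * c + α, fun x hx => ?_⟩
    have hshift : (m : ℝ) * Int.fract ((m : ℝ) ^ n * x + c) + α =
        (m : ℝ) ^ (n + 1) * x + (m * c + α) - ((m * ⌊(m : ℝ) ^ n * x + c⌋ : ℤ) : ℝ) := by
      rw [Int.fract]; push_cast; ring
    rw [Function.iterate_succ_apply', hc x hx, alphaBetaMap, hshift, Int.fract_sub_intCast]

theorem exists_affineOnto_iterate_natCast {m : ℕ} (hm : 1 < m) {u v : ℝ} (hu : 0 ≤ u)
    (huv : u < v) (hv : v ≤ 1) :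
    ∃ n w z, u ≤ w ∧ w < z ∧ z ≤ v ∧ AffineOnto (alphaBetaMap α m)^[n] w z 0 1 := by
  obtain ⟨n, hn⟩ := pow_unbounded_of_one_lt (2 / (v - u)) (Nat.one_lt_cast.2 hm : (1 : ℝ) < m)
  obtain ⟨c, hc⟩ := exists_iterate_alphaBetaMap_natCast_eq_fract (α := α) m n
  set P := (m : ℝ) ^ n
  have hP : 0 < P := by positivity
  have hPvu : 2 < P * (v - u) := by rw [div_lt_iff₀ (by linarith)] at hn; linarith
  set M := ⌈P * u + c⌉
  have hM1 : P * u + c ≤ M := Int.le_ceil _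
  have hM2 : (M : ℝ) < P * u + c + 1 := Int.ceil_lt_add_one _
  refine ⟨n, (M - c) / P, (M + 1 - c) / P, (le_div_iff₀ hP).2 (by linarith),
    (div_lt_div_iff_of_pos_right hP).2 (by linarith), (div_le_iff₀ hP).2 (by nlinarith), ?_⟩
  intro x hx
  have hx1 : (M : ℝ) ≤ P * x + c := by have := (div_le_iff₀' hP).1 hx.1; linarith
  have hx2 : P * x + c < M + 1 := by have := (lt_div_iff₀' hP).1 hx.2; linarith
  have hx0 : x ∈ Ico (0 : ℝ) 1 := ⟨by nlinarith, by nlinarith⟩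
  rw [hc x hx0, Int.fract, Int.floor_eq_iff.2 ⟨hx1, hx2⟩]
  field_simp
  ring

theorem exists_affineOnto_iterate (hβ : 2 ≤ β) {u v : ℝ} (hu : 0 ≤ u) (huv : u < v) (hv : v ≤ 1) :
    ∃ n w z, u ≤ w ∧ w < z ∧ z ≤ v ∧ AffineOnto (alphaBetaMap α β)^[n] w z 0 1 := by
  rcases hβ.lt_or_eq with hβ | rfl
  · exact exists_affineOnto_iterate_of_two_lt hβ hu huv hv
  · exact_mod_cast exists_affineOnto_iterate_natCast (m := 2) one_lt_two hu huv hv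

theorem alphaBetaMap_transitive (hβ : 2 ≤ β) (U V : Set ℝ) (hU : IsOpen U) (hV : IsOpen V)
    (hUne : (U ∩ Ioo 0 1).Nonempty) (hVne : (V ∩ Ioo 0 1).Nonempty) :
    ∃ n, (U ∩ interior ((alphaBetaMap α β)^[n] ⁻¹' V)).Nonempty := by
  obtain ⟨u, v, huv, huvU⟩ := (hU.inter isOpen_Ioo).exists_Ioo_subset hUne
  obtain ⟨hu, hv⟩ := (Ioo_subset_Ioo_iff huv).1 (huvU.trans inter_subset_right)
  obtain ⟨n, w, z, hw, hwz, hz, h⟩ := exists_affineOnto_iterate (α := α) hβ hu huv hv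
  obtain ⟨y, hyV, hy⟩ := hVne
  set x := w + y * (z - w)
  have hx : x ∈ Ioo w z := ⟨by nlinarith [hy.1], by nlinarith [hy.2]⟩
  have hfx : (alphaBetaMap α β)^[n] x = y := by
    rw [h x (Ioo_subset_Ico_self hx)]
    field_simp [sub_ne_zero.2 hwz.ne']
    ring
  refine ⟨n, x, (huvU ⟨hw.trans_lt hx.1, hx.2.trans_le hz⟩).1, ?_⟩
  exact mem_interior_iff_mem_nhds.2 ((h.continuousAt hx).preimage_mem_nhds
    (hV.mem_nhds (hfx ▸ hyV)))

end

theorem alphabeta_transitive_general (α β : ℝ) (hβ : 2 ≤ β)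
    (T : ℝ → ℝ)
    (hT : ∀ x ∈ Set.Ico (0 : ℝ) 1, T x = β * x + α - ⌊β * x + α⌋) :
    ∃ x ∈ Set.Icc (0 : ℝ) 1, Set.Icc (0 : ℝ) 1 ⊆ closure {y | ∃ n : ℕ, T^[n] x = y} := by
  obtain ⟨x, hx, hdense⟩ := exists_dense_orbit_of_interior_preimage isOpen_Ioo
    (nonempty_Ioo.2 one_pos) (alphaBetaMap_transitive (α := α) hβ)
  have horbit : {y | ∃ n : ℕ, T^[n] x = y} = range fun n => (alphaBetaMap α β)^[n] x := by
    have hTF : EqOn T (alphaBetaMap α β) (Ico 0 1) := hT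
    ext y
    simp only [mem_ofPred_eq, mem_range, hTF.iterate (fun y _ => alphaBetaMap_mem_Ico y) _
      (Ioo_subset_Ico_self hx)]
  refine ⟨x, Ioo_subset_Icc_self hx, ?_⟩
  rw [← closure_Ioo zero_ne_one, horbit]
  exact closure_minimal hdense isClosed_closure

/-- **Proposition.** If `0 ≤ α < 1` and `β ≥ 2`, then the alpha-beta transformation
`T_{α,β}` (given by `T(x) = βx + α - ⌊βx + α⌋` on `[0,1)` and `T(1) = lim_{x↗1} T(x)`)
is transitive: some point of `[0,1]` has dense forward orbit in `[0,1]`. -/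
theorem alphabeta_transitive (α β : ℝ) (hα0 : 0 ≤ α) (hα1 : α < 1) (hβ : 2 ≤ β)
    (T : ℝ → ℝ)
    (hT : ∀ x ∈ Set.Ico (0 : ℝ) 1, T x = β * x + α - ⌊β * x + α⌋)
    (hT1 : Tendsto (fun x : ℝ => β * x + α - ⌊β * x + α⌋)
      (nhdsWithin 1 (Set.Iio 1)) (nhds (T 1))) :
    ∃ x ∈ Set.Icc (0 : ℝ) 1, Set.Icc (0 : ℝ) 1 ⊆ closure {y | ∃ n : ℕ, T^[n] x = y} :=
  alphabeta_transitive_general α β hβ T hT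

end Paper
end

section
/- For all a, b ∈ [0,∞] with a ≤ b, there exist sequences (ℓ_p)_{p≥1} and (γ_p)_{p≥1} of positive real numbers such that: (a) lim_{p→∞} γ_{2p+1} = a and lim_{p→∞} γ_{2p} = b (limits in [0,∞]); (b) lim_{p→∞} (ℓ_{p+1} − ℓ_p) = ∞; (c) lim_{p→∞} ℓ_p / e^{γ_p ℓ_p} = 0; (d) limsup_{p→∞} γ_{p+1} ℓ_{p+1} / ℓ_p ≤ b; (e) γ_p ℓ_p + 1 ≤ γ_{p+1} ℓ_{p+1} for all p ∈ ℕ; (f) for any constant c ≥ 0, lim_{p→∞} (cp + Σ_{j=1}^{p} ℓ_j) / e^{γ_p ℓ_p} = 0. -/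
/-!
Take `γ_q` to be `b + 1/(q+1)` for even `q` and `a + 1/(q+1)` for odd `q` (with `q + 1` in place of
an infinite endpoint), and define `ℓ` recursively by
`ℓ_{p+1} = max (ℓ_p + p) ((γ_p ℓ_p + 1) / γ_{p+1})`. The first term of the maximum makes the gaps
grow and `ℓ_p` quadratic in `p`; the second gives `t_{p+1} ≥ t_p + 1` for `t_p = γ_p ℓ_p`, so
`t_p ≥ p + 1`. Since `γ_p ≥ 1/(p+1)`, the numerators in (c) and (f) are `O(t_p³)`, which is
negligible against `e^{t_p}`. For (d), `t_{p+1} / ℓ_p ≤ β_p (1 + p/ℓ_p) + 1/ℓ_p` with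
`β_p = b + 1/(p+1) → b`.
-/

open Filter Topology
open scoped ENNReal

namespace Paper

theorem tendsto_div_exp_of_le_mul_pow {ι : Type*} {l : Filter ι} {x t : ι → ℝ}
    (ht : Tendsto t l atTop) (n : ℕ) (C : ℝ) (hx₀ : ∀ i, 0 ≤ x i) (hx : ∀ i, x i ≤ C * t i ^ n) :
    Tendsto (fun i => x i / Real.exp (t i)) l (𝓝 0) := by
  have hlim := ((Real.tendsto_pow_mul_exp_neg_atTop_nhds_zero n).comp ht).const_mul C
  rw [mul_zero] at hlim
  refine squeeze_zero (fun i => div_nonneg (hx₀ i) (Real.exp_pos _).le) (fun i => ?_) hlim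
  calc x i / Real.exp (t i) ≤ C * t i ^ n / Real.exp (t i) := by gcongr; exact hx i
    _ = C * (t i ^ n * Real.exp (-t i)) := by rw [Real.exp_neg]; ring

theorem limsup_ofReal_le_of_eventually_le_of_tendsto {ι : Type*} {l : Filter ι} [l.NeBot]
    {u v : ι → ℝ} {c : ℝ} (huv : ∀ᶠ i in l, u i ≤ v i) (hv : Tendsto v l (𝓝 c)) :
    l.limsup (fun i => ENNReal.ofReal (u i)) ≤ ENNReal.ofReal c :=
  calc l.limsup (fun i => ENNReal.ofReal (u i))
      ≤ l.limsup (fun i => ENNReal.ofReal (v i)) :=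
        limsup_le_limsup (huv.mono fun _ h => ENNReal.ofReal_le_ofReal h)
    _ = ENNReal.ofReal c := (ENNReal.tendsto_ofReal hv).limsup_eq

noncomputable def approx (x : ℝ≥0∞) (q : ℕ) : ℝ :=
  if x = ∞ then q + 1 else x.toReal + 1 / (q + 1)

theorem one_div_le_approx (x : ℝ≥0∞) (q : ℕ) : 1 / ((q : ℝ) + 1) ≤ approx x q := by
  unfold approx
  split_ifs
  · rw [div_le_iff₀ (by positivity)]; nlinarith [(q.cast_nonneg : (0 : ℝ) ≤ q)]
  · linarith [x.toReal_nonneg]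

theorem tendsto_ofReal_approx (x : ℝ≥0∞) :
    Tendsto (fun q => ENNReal.ofReal (approx x q)) atTop (𝓝 x) := by
  by_cases hx : x = ∞
  · simp only [approx, hx, if_true]
    exact ENNReal.tendsto_ofReal_atTop.comp
      (tendsto_atTop_add_const_right _ 1 tendsto_natCast_atTop_atTop)
  · have h := tendsto_const_nhds (x := x.toReal).add
      (tendsto_one_div_add_atTop_nhds_zero_nat (𝕜 := ℝ))
    rw [add_zero] at h
    simpa only [approx, hx, if_false, ENNReal.ofReal_toReal hx] using ENNReal.tendsto_ofReal h

noncomputable def gam (a b : ℝ≥0∞) (q : ℕ) : ℝ :=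
  if Even q then approx b q else approx a q

noncomputable def ell (a b : ℝ≥0∞) : ℕ → ℝ
  | 0 => 1
  | p + 1 => max (ell a b p + p) ((gam a b p * ell a b p + 1) / gam a b (p + 1))

section

variable (a b : ℝ≥0∞)

theorem one_div_le_gam (q : ℕ) : 1 / ((q : ℝ) + 1) ≤ gam a b q := by
  unfold gam; split_ifs <;> exact one_div_le_approx _ q

theorem gam_pos (q : ℕ) : 0 < gam a b q :=
  lt_of_lt_of_le (by positivity) (one_div_le_gam a b q)

theorem tendsto_ofReal_gam_two_mul_add_one :
    Tendsto (fun p : ℕ => ENNReal.ofReal (gam a b (2 * p + 1))) atTop (𝓝 a) := by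
  have h := (tendsto_ofReal_approx a).comp
    (tendsto_atTop_mono (fun p => show p ≤ 2 * p + 1 by omega) tendsto_id)
  refine h.congr fun p => ?_
  simp [gam]

theorem tendsto_ofReal_gam_two_mul :
    Tendsto (fun p : ℕ => ENNReal.ofReal (gam a b (2 * p))) atTop (𝓝 b) := by
  have h := (tendsto_ofReal_approx b).comp
    (tendsto_atTop_mono (fun p => show p ≤ 2 * p by omega) tendsto_id)
  refine h.congr fun p => ?_
  simp [gam]

theorem gam_le {a b : ℝ≥0∞} (hab : a ≤ b) (hb : b ≠ ∞) (q : ℕ) :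
    gam a b q ≤ b.toReal + 1 / ((q : ℝ) + 1) := by
  have ha : a ≠ ∞ := ne_top_of_le_ne_top hb hab
  have h : a.toReal ≤ b.toReal := ENNReal.toReal_mono hb hab
  unfold gam approx
  split_ifs <;> linarith

theorem ell_add_le_ell_succ (p : ℕ) : ell a b p + p ≤ ell a b (p + 1) := le_max_left _ _

theorem one_le_ell (p : ℕ) : 1 ≤ ell a b p := by
  induction p with
  | zero => simp [ell]
  | succ p ih => linarith [ell_add_le_ell_succ a b p, (p.cast_nonneg : (0 : ℝ) ≤ p)]

theorem ell_pos (p : ℕ) : 0 < ell a b p := one_pos.trans_le (one_le_ell a b p)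

theorem ell_mono : Monotone (ell a b) :=
  monotone_nat_of_le_succ fun p => by
    linarith [ell_add_le_ell_succ a b p, (p.cast_nonneg : (0 : ℝ) ≤ p)]

theorem mul_sub_one_div_two_le_ell (p : ℕ) : (p : ℝ) * (p - 1) / 2 ≤ ell a b p := by
  induction p with
  | zero => simp [ell]
  | succ p ih => push_cast; linarith [ell_add_le_ell_succ a b p]

theorem tendsto_ell_succ_sub_ell : Tendsto (fun p : ℕ => ell a b (p + 1) - ell a b p) atTop atTop :=
  tendsto_atTop_mono (fun p => by linarith [ell_add_le_ell_succ a b p]) tendsto_natCast_atTop_atTop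

theorem tendsto_ell_atTop : Tendsto (ell a b) atTop atTop := by
  rw [← tendsto_add_atTop_iff_nat 1]
  refine tendsto_atTop_mono (fun p => ?_) tendsto_natCast_atTop_atTop
  linarith [ell_add_le_ell_succ a b p, one_le_ell a b p]

theorem tendsto_natCast_div_ell : Tendsto (fun p : ℕ => (p : ℝ) / ell a b p) atTop (𝓝 0) := by
  refine squeeze_zero' (g := fun p : ℕ => 2 / ((p : ℝ) - 1))
    (Eventually.of_forall fun p => div_nonneg p.cast_nonneg (ell_pos a b p).le) ?_
    (tendsto_const_nhds.div_atTop (tendsto_atTop_add_const_right _ _ tendsto_natCast_atTop_atTop))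
  filter_upwards [eventually_ge_atTop 2] with p hp
  have hp' : (2 : ℝ) ≤ p := by exact_mod_cast hp
  rw [div_le_div_iff₀ (ell_pos a b p) (by linarith)]
  nlinarith [mul_sub_one_div_two_le_ell a b p]

theorem gam_mul_ell_succ (p : ℕ) :
    gam a b (p + 1) * ell a b (p + 1)
      = max (gam a b (p + 1) * (ell a b p + p)) (gam a b p * ell a b p + 1) := by
  rw [ell, mul_max_of_nonneg _ _ (gam_pos a b (p + 1)).le,
    mul_div_cancel₀ _ (gam_pos a b (p + 1)).ne']

theorem gam_mul_ell_add_one_le (p : ℕ) :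
    gam a b p * ell a b p + 1 ≤ gam a b (p + 1) * ell a b (p + 1) :=
  (gam_mul_ell_succ a b p).ge.trans' (le_max_right _ _)

theorem natCast_add_one_le_gam_mul_ell (p : ℕ) : (p : ℝ) + 1 ≤ gam a b p * ell a b p := by
  induction p with
  | zero => simpa [ell] using one_div_le_gam a b 0
  | succ p ih => push_cast; linarith [gam_mul_ell_add_one_le a b p]

theorem tendsto_gam_mul_ell_atTop : Tendsto (fun p => gam a b p * ell a b p) atTop atTop :=
  tendsto_atTop_mono (natCast_add_one_le_gam_mul_ell a b)
    (tendsto_atTop_add_const_right _ 1 tendsto_natCast_atTop_atTop)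

theorem ell_le_sq_gam_mul_ell (p : ℕ) : ell a b p ≤ (gam a b p * ell a b p) ^ 2 := by
  have hp : (0 : ℝ) < p + 1 := by positivity
  have hγ := one_div_le_gam a b p
  have ht := natCast_add_one_le_gam_mul_ell a b p
  calc ell a b p = (p + 1) * (1 / (p + 1) * ell a b p) := by field_simp
    _ ≤ (p + 1) * (gam a b p * ell a b p) := by gcongr; exact (ell_pos a b p).le
    _ ≤ (gam a b p * ell a b p) ^ 2 := by rw [sq]; gcongr; linarith

theorem sum_Icc_ell_le (p : ℕ) : ∑ j ∈ Finset.Icc 1 p, ell a b j ≤ p * ell a b p := by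
  simpa [nsmul_eq_mul] using Finset.sum_le_card_nsmul (Finset.Icc 1 p) (ell a b) (ell a b p)
    fun j hj => ell_mono a b (Finset.mem_Icc.mp hj).2

theorem tendsto_ell_div_exp :
    Tendsto (fun p => ell a b p / Real.exp (gam a b p * ell a b p)) atTop (𝓝 0) :=
  tendsto_div_exp_of_le_mul_pow (tendsto_gam_mul_ell_atTop a b) 2 1 (fun p => (ell_pos a b p).le)
    fun p => by simpa using ell_le_sq_gam_mul_ell a b p

theorem tendsto_mul_add_sum_ell_div_exp {c : ℝ} (hc : 0 ≤ c) :
    Tendsto (fun p : ℕ => (c * p + ∑ j ∈ Finset.Icc 1 p, ell a b j) /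
      Real.exp (gam a b p * ell a b p)) atTop (𝓝 0) := by
  refine tendsto_div_exp_of_le_mul_pow (tendsto_gam_mul_ell_atTop a b) 3 (c + 1)
    (fun p => add_nonneg (by positivity) (Finset.sum_nonneg fun j _ => (ell_pos a b j).le))
    fun p => ?_
  set t := gam a b p * ell a b p
  have ht : (p : ℝ) + 1 ≤ t := natCast_add_one_le_gam_mul_ell a b p
  have hℓ : ell a b p ≤ t ^ 2 := ell_le_sq_gam_mul_ell a b p
  have hp : (0 : ℝ) ≤ p := p.cast_nonneg
  have ht3 : t ≤ t ^ 3 := le_self_pow₀ (by linarith) (by norm_num)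
  calc c * p + ∑ j ∈ Finset.Icc 1 p, ell a b j ≤ c * t + t * t ^ 2 := by
        gcongr
        · linarith
        · exact (sum_Icc_ell_le a b p).trans
            (mul_le_mul (by linarith) hℓ (ell_pos a b p).le (by linarith))
    _ ≤ (c + 1) * t ^ 3 := by nlinarith

theorem limsup_gam_mul_ell_succ_div_ell_le {a b : ℝ≥0∞} (hab : a ≤ b) :
    atTop.limsup (fun p : ℕ => ENNReal.ofReal (gam a b (p + 1) * ell a b (p + 1) / ell a b p))
      ≤ b := by
  by_cases hb : b = ∞
  · simp [hb]
  set β : ℕ → ℝ := fun p => b.toReal + 1 / ((p : ℝ) + 1)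
  have hβ : Tendsto β atTop (𝓝 b.toReal) := by
    simpa only [add_zero] using
      tendsto_const_nhds (x := b.toReal).add (tendsto_one_div_add_atTop_nhds_zero_nat (𝕜 := ℝ))
  have hbound : ∀ p : ℕ, gam a b (p + 1) * ell a b (p + 1) / ell a b p
      ≤ β p * (1 + p / ell a b p) + (ell a b p)⁻¹ := by
    intro p
    have hℓ := ell_pos a b p
    have hγ : gam a b (p + 1) ≤ β p :=
      (gam_le hab hb (p + 1)).trans (by simp only [β]; push_cast; gcongr; linarith)
    have hγ' : gam a b p ≤ β p := gam_le hab hb p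
    have hβ0 : 0 ≤ β p := (gam_pos a b p).le.trans hγ'
    have hrhs : (β p * (1 + p / ell a b p) + (ell a b p)⁻¹) * ell a b p
        = β p * (ell a b p + p) + 1 := by field_simp
    rw [div_le_iff₀ hℓ, gam_mul_ell_succ, hrhs]
    refine max_le ?_ ?_
    · linarith [mul_le_mul_of_nonneg_right hγ (by positivity : (0 : ℝ) ≤ ell a b p + p)]
    · nlinarith [p.cast_nonneg (α := ℝ)]
  have hlim : Tendsto (fun p : ℕ => β p * (1 + p / ell a b p) + (ell a b p)⁻¹) atTop
      (𝓝 b.toReal) := by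
    simpa using (hβ.mul (tendsto_const_nhds (x := (1 : ℝ)).add (tendsto_natCast_div_ell a b))).add
      (tendsto_inv_atTop_zero.comp (tendsto_ell_atTop a b))
  simpa [ENNReal.ofReal_toReal hb] using
    limsup_ofReal_le_of_eventually_le_of_tendsto (Eventually.of_forall hbound) hlim

end

/-- **Computational lemma.** For all `a ≤ b` in `[0,∞]` there exist sequences
`(ℓ_p)_{p≥1}`, `(γ_p)_{p≥1}` of positive reals with properties (a)–(f). -/
theorem computational_lemma (a b : ℝ≥0∞) (hab : a ≤ b) :
    ∃ ℓ γ : ℕ → ℝ,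
      (∀ p, 1 ≤ p → 0 < ℓ p) ∧
      (∀ p, 1 ≤ p → 0 < γ p) ∧
      -- (a) `γ_{2p+1} → a` and `γ_{2p} → b` (limits in `[0,∞]`)
      Tendsto (fun p : ℕ => ENNReal.ofReal (γ (2 * p + 1))) atTop (nhds a) ∧
      Tendsto (fun p : ℕ => ENNReal.ofReal (γ (2 * p))) atTop (nhds b) ∧
      -- (b) `ℓ_{p+1} - ℓ_p → ∞`
      Tendsto (fun p : ℕ => ℓ (p + 1) - ℓ p) atTop atTop ∧
      -- (c) `ℓ_p / e^{γ_p ℓ_p} → 0`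
      Tendsto (fun p : ℕ => ℓ p / Real.exp (γ p * ℓ p)) atTop (nhds 0) ∧
      -- (d) `limsup γ_{p+1} ℓ_{p+1} / ℓ_p ≤ b` (in `[0,∞]`)
      Filter.atTop.limsup (fun p : ℕ => ENNReal.ofReal (γ (p + 1) * ℓ (p + 1) / ℓ p)) ≤ b ∧
      -- (e) `γ_p ℓ_p + 1 ≤ γ_{p+1} ℓ_{p+1}` for all `p ≥ 1`
      (∀ p, 1 ≤ p → γ p * ℓ p + 1 ≤ γ (p + 1) * ℓ (p + 1)) ∧
      -- (f) for any `c ≥ 0`, `(c p + ∑_{j=1}^p ℓ_j)/e^{γ_p ℓ_p} → 0`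
      (∀ c : ℝ, 0 ≤ c →
        Tendsto (fun p : ℕ => (c * p + ∑ j ∈ Finset.Icc 1 p, ℓ j) / Real.exp (γ p * ℓ p))
          atTop (nhds 0)) :=
  ⟨ell a b, gam a b, fun p _ => ell_pos a b p, fun p _ => gam_pos a b p,
    tendsto_ofReal_gam_two_mul_add_one a b, tendsto_ofReal_gam_two_mul a b,
    tendsto_ell_succ_sub_ell a b, tendsto_ell_div_exp a b,
    limsup_gam_mul_ell_succ_div_ell_le hab, fun p _ => gam_mul_ell_add_one_le a b p,
    fun _ hc => tendsto_mul_add_sum_ell_div_exp a b hc⟩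

end Paper
end

section
/- Let T : [0,1] → [0,1] be a transitive piecewise monotonic map. Then the coding map π : X_T → Σ_m is injective. -/
open Filter Set Topology

namespace Paper

/-- The one-sided full shift on `m` symbols. -/
abbrev FullShift (m : ℕ) := ℕ → Fin m

/-- `T : [0,1] → [0,1]` is piecewise monotonic with pieces `I 0, …, I (m-1)`. -/
def PiecewiseMonotonic (T : ℝ → ℝ) {m : ℕ} (I : Fin m → Set ℝ) : Prop :=
  Set.MapsTo T (Set.Icc 0 1) (Set.Icc 0 1) ∧
  (∀ j, I j ⊆ Set.Icc 0 1) ∧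
  (∀ j, (I j).OrdConnected) ∧
  (∀ j, ∃ a ∈ I j, ∃ b ∈ I j, a ≠ b) ∧
  Pairwise (Function.onFun Disjoint I) ∧
  (⋃ j, I j) = Set.Icc 0 1 ∧
  ∀ j, ContinuousOn T (interior (I j)) ∧
    (StrictMonoOn T (interior (I j)) ∨ StrictAntiOn T (interior (I j)))

/-- `T` is transitive on `[0,1]`. -/
def TransitiveOn01 (T : ℝ → ℝ) : Prop :=
  ∃ x ∈ Set.Icc (0 : ℝ) 1, Set.Icc (0 : ℝ) 1 ⊆ closure {y | ∃ n : ℕ, T^[n] x = y}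

/-- `X_T = ⋂_{n≥0} T^{-n}(⋃_j int(I_j))`, the domain of the coding map. -/
def codingDomain (T : ℝ → ℝ) {m : ℕ} (I : Fin m → Set ℝ) : Set ℝ :=
  {x | ∀ n : ℕ, T^[n] x ∈ ⋃ j, interior (I j)}

/-- Composition of strictly monotone-or-antitone maps on compatible sets. -/
private lemma comp_monoAnti {f g : ℝ → ℝ} {S U : Set ℝ}
    (hf : StrictMonoOn f S ∨ StrictAntiOn f S)
    (hg : StrictMonoOn g U ∨ StrictAntiOn g U)
    (hm : ∀ t ∈ S, f t ∈ U) :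
    StrictMonoOn (fun t => g (f t)) S ∨ StrictAntiOn (fun t => g (f t)) S := by
  rcases hf with hf | hf <;> rcases hg with hg | hg
  · exact Or.inl fun a ha b hb hab => hg (hm a ha) (hm b hb) (hf ha hb hab)
  · exact Or.inr fun a ha b hb hab => hg (hm a ha) (hm b hb) (hf ha hb hab)
  · exact Or.inr fun a ha b hb hab => hg (hm b hb) (hm a ha) (hf ha hb hab)
  · exact Or.inl fun a ha b hb hab => hg (hm b hb) (hm a ha) (hf ha hb hab)

/-- A monotone-or-antitone map sends a point between `a` and `b` to a point
between `f a` and `f b`. -/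
private lemma map_mem_uIcc {f : ℝ → ℝ} {P : Set ℝ}
    (hf : StrictMonoOn f P ∨ StrictAntiOn f P)
    {a b t : ℝ} (ha : a ∈ P) (hb : b ∈ P) (ht : t ∈ P) (htm : t ∈ uIcc a b) :
    f t ∈ uIcc (f a) (f b) := by
  rw [Set.mem_uIcc] at htm ⊢
  rcases hf with hf | hf
  · have h := hf.monotoneOn
    rcases htm with ⟨h1, h2⟩ | ⟨h1, h2⟩
    · exact Or.inl ⟨h ha ht h1, h ht hb h2⟩
    · exact Or.inr ⟨h hb ht h1, h ht ha h2⟩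
  · have h := hf.antitoneOn
    rcases htm with ⟨h1, h2⟩ | ⟨h1, h2⟩
    · exact Or.inr ⟨h ht hb h2, h ha ht h1⟩
    · exact Or.inl ⟨h ht ha h2, h hb ht h1⟩

/-- The orbit of a point under a strictly monotone map is monotone or antitone. -/
private lemma seq_monoAnti {g : ℝ → ℝ} {L : Set ℝ} (hg : StrictMonoOn g L)
    (w : ℕ → ℝ) (hw : ∀ k, w k ∈ L) (hs : ∀ k, w (k + 1) = g (w k)) :
    Monotone w ∨ Antitone w := by
  have h := hg.monotoneOn
  rcases le_total (w 0) (w 1) with h01 | h01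
  · left
    apply monotone_nat_of_le_succ
    intro k
    induction k with
    | zero => exact h01
    | succ n ih =>
      have h2 := h (hw n) (hw (n + 1)) ih
      rw [← hs n, ← hs (n + 1)] at h2
      exact h2
  · right
    apply antitone_nat_of_succ_le
    intro k
    induction k with
    | zero => exact h01
    | succ n ih =>
      have h2 := h (hw (n + 1)) (hw n) ih
      rw [← hs (n + 1), ← hs n] at h2
      exact h2

/-- A monotone or antitone sequence in `[0,1]` converges. -/
private lemma exists_tendsto {u : ℕ → ℝ} (h : Monotone u ∨ Antitone u)
    (hb : ∀ k, u k ∈ Set.Icc (0 : ℝ) 1) : ∃ a, Tendsto u atTop (𝓝 a) := by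
  rcases h with h | h
  · exact ⟨_, tendsto_atTop_ciSup h ⟨1, by rintro _ ⟨k, rfl⟩; exact (hb k).2⟩⟩
  · exact ⟨_, tendsto_atTop_ciInf h ⟨0, by rintro _ ⟨k, rfl⟩; exact (hb k).1⟩⟩

/-- Main step: two distinct points with the same itinerary contradict transitivity. -/
private lemma key (m : ℕ) (T : ℝ → ℝ) (I : Fin m → Set ℝ)
    (hpm : PiecewiseMonotonic T I) (htrans : TransitiveOn01 T)
    (π : ℝ → FullShift m)
    (hπ : ∀ x ∈ codingDomain T I, ∀ n : ℕ, T^[n] x ∈ interior (I (π x n)))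
    {x y : ℝ} (hx : x ∈ codingDomain T I) (hy : y ∈ codingDomain T I)
    (hxy : π x = π y) (hlt : x < y) : False := by
  obtain ⟨-, hsub, hconn, -, hdisj, -, hmono⟩ := hpm
  -- basic facts about the intervals J n = uIcc (T^[n] x) (T^[n] y)
  have hJx : ∀ n, T^[n] x ∈ interior (I (π x n)) := hπ x hx
  have hJy : ∀ n, T^[n] y ∈ interior (I (π x n)) := by
    intro n
    have h := hπ y hy n
    rwa [← hxy] at h
  have hJP : ∀ n, uIcc (T^[n] x) (T^[n] y) ⊆ interior (I (π x n)) := fun n =>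
    ((hconn (π x n)).interior).uIcc_subset (hJx n) (hJy n)
  have hTP : ∀ j, StrictMonoOn T (interior (I j)) ∨ StrictAntiOn T (interior (I j)) :=
    fun j => (hmono j).2
  have hstep : ∀ n, ∀ t ∈ uIcc (T^[n] x) (T^[n] y),
      T t ∈ uIcc (T^[n + 1] x) (T^[n + 1] y) := by
    intro n t ht
    have h := map_mem_uIcc (hTP (π x n)) (hJx n) (hJy n) (hJP n ht) ht
    simpa [Function.iterate_succ_apply'] using h
  have hstep_iter : ∀ q n, ∀ t ∈ uIcc (T^[n] x) (T^[n] y),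
      T^[q] t ∈ uIcc (T^[n + q] x) (T^[n + q] y) := by
    intro q
    induction q with
    | zero => intro n t ht; simpa using ht
    | succ q ih =>
      intro n t ht
      have h1 := hstep (n + q) _ (ih n t ht)
      rw [Function.iterate_succ_apply']
      exact h1
  have hIcc : ∀ n, uIcc (T^[n] x) (T^[n] y) ⊆ Set.Icc (0 : ℝ) 1 := fun n =>
    (hJP n).trans (interior_subset.trans (hsub (π x n)))
  have hx01 : x ∈ Set.Icc (0 : ℝ) 1 := hsub (π x 0) (interior_subset (by simpa using hJx 0))
  have hy01 : y ∈ Set.Icc (0 : ℝ) 1 := hsub (π x 0) (interior_subset (by simpa using hJy 0))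
  -- the transitive point
  obtain ⟨z, hz, hdense⟩ := htrans
  have hfind : ∀ a b : ℝ, x ≤ a → b ≤ y → a < b → ∃ s : ℕ, T^[s] z ∈ Set.Ioo a b := by
    intro a b hax hby hab
    have hmid : (a + b) / 2 ∈ Set.Ioo a b := ⟨by linarith, by linarith⟩
    have h1 : (a + b) / 2 ∈ closure {w | ∃ n : ℕ, T^[n] z = w} := by
      apply hdense
      exact ⟨hx01.1.trans (hax.trans hmid.1.le), (hmid.2.le.trans hby).trans hy01.2⟩
    obtain ⟨w, hwo, n, rfl⟩ := mem_closure_iff.mp h1 _ isOpen_Ioo hmid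
    exact ⟨n, hwo⟩
  obtain ⟨s1, hs1⟩ := hfind x y le_rfl le_rfl hlt
  obtain ⟨s2, hs2⟩ := hfind x (T^[s1] z) le_rfl hs1.2.le hs1.1
  have hne : s2 ≠ s1 := by
    intro h
    rw [h] at hs2
    exact lt_irrefl _ hs2.2
  obtain ⟨s0, p, hp, hu, hb⟩ :
      ∃ s0 p : ℕ, 0 < p ∧ T^[s0] z ∈ Set.Ioo x y ∧ T^[p + s0] z ∈ Set.Ioo x y := by
    rcases lt_or_gt_of_ne hne with h | h
    · refine ⟨s2, s1 - s2, by omega, ⟨hs2.1, hs2.2.trans hs1.2⟩, ?_⟩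
      have he : s1 - s2 + s2 = s1 := by omega
      rw [he]
      exact hs1
    · refine ⟨s1, s2 - s1, by omega, hs1, ?_⟩
      have he : s2 - s1 + s1 = s2 := by omega
      rw [he]
      exact ⟨hs2.1, hs2.2.trans hs1.2⟩
  have hIooJ : Set.Ioo x y ⊆ uIcc x y := by
    intro q hq
    rw [Set.uIcc_of_le hlt.le]
    exact ⟨hq.1.le, hq.2.le⟩
  have hbJ0 : T^[p + s0] z ∈ uIcc (T^[0] x) (T^[0] y) := by simpa using hIooJ hb
  have hbJp : T^[p + s0] z ∈ uIcc (T^[p] x) (T^[p] y) := by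
    have h := hstep_iter p 0 _ (by simpa using hIooJ hu : T^[s0] z ∈ uIcc (T^[0] x) (T^[0] y))
    rw [Function.iterate_add_apply]
    simpa using h
  -- v n := T^[n] (T^[p+s0] z) lies in J n and J (n+p)
  have hv : ∀ n : ℕ, T^[n] (T^[p + s0] z) ∈ uIcc (T^[n] x) (T^[n] y) ∧
      T^[n] (T^[p + s0] z) ∈ uIcc (T^[n + p] x) (T^[n + p] y) := by
    intro n
    constructor
    · have h := hstep_iter n 0 _ hbJ0
      simpa using h
    · have h := hstep_iter n p _ hbJp
      simpa [Nat.add_comm] using h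
  -- the itinerary of x is periodic with period p
  have hper : ∀ n : ℕ, π x (n + p) = π x n := by
    intro n
    by_contra hne2
    have h1 := hJP n (hv n).1
    have h2 := hJP (n + p) (hv n).2
    have hd : Disjoint (I (π x n)) (I (π x (n + p))) := hdisj fun h => hne2 h.symm
    exact Set.disjoint_left.mp hd (interior_subset h1) (interior_subset h2)
  have hper' : ∀ k r : ℕ, π x (k * p + r) = π x r := by
    intro k
    induction k with
    | zero => intro r; simp
    | succ k ih =>
      intro r
      have he : (k + 1) * p + r = k * p + r + p := by ring
      rw [he, hper, ih]
  -- the union L of the intervals J (k*p)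
  set L : Set ℝ := ⋃ k : ℕ, uIcc (T^[k * p] x) (T^[k * p] y) with hL
  have hLmem : ∀ (r : ℕ), ∀ t ∈ L, T^[r] t ∈ interior (I (π x r)) := by
    intro r t ht
    obtain ⟨k, hk⟩ := Set.mem_iUnion.mp ht
    have h1 := hstep_iter r (k * p) t hk
    have h2 := hJP (k * p + r) h1
    rwa [hper' k r] at h2
  have iterMono : ∀ q : ℕ, StrictMonoOn (T^[q]) L ∨ StrictAntiOn (T^[q]) L := by
    intro q
    induction q with
    | zero => exact Or.inl fun a _ b _ hab => by simpa using hab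
    | succ q ih =>
      have h := comp_monoAnti ih (hTP (π x q)) (fun t ht => hLmem q t ht)
      rcases h with h | h
      · left
        intro a ha b hb hab
        rw [Function.iterate_succ_apply', Function.iterate_succ_apply']
        exact h ha hb hab
      · right
        intro a ha b hb hab
        rw [Function.iterate_succ_apply', Function.iterate_succ_apply']
        exact h ha hb hab
  -- the sequence w k = T^[k*p] (T^[p+s0] z) lives in L
  have hwL : ∀ k : ℕ, T^[k * p] (T^[p + s0] z) ∈ L :=
    fun k => Set.mem_iUnion.mpr ⟨k, (hv (k * p)).1⟩
  have hmapsL : ∀ t ∈ L, T^[p] t ∈ L := by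
    intro t ht
    obtain ⟨k, hk⟩ := Set.mem_iUnion.mp ht
    have h1 := hstep_iter p (k * p) t hk
    refine Set.mem_iUnion.mpr ⟨k + 1, ?_⟩
    have he : k * p + p = (k + 1) * p := by ring
    rwa [he] at h1
  have hwstep : ∀ k : ℕ, T^[(k + 1) * p] (T^[p + s0] z) = T^[p] (T^[k * p] (T^[p + s0] z)) := by
    intro k
    have e1 : T^[p] (T^[k * p] (T^[p + s0] z)) = T^[p + k * p] (T^[p + s0] z) :=
      (Function.iterate_add_apply T _ _ _).symm
    rw [e1, show p + k * p = (k + 1) * p from by ring]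
  -- the subsequences along even/odd multiples of p are monotone or antitone
  have hWma : ∀ e : ℕ, Monotone (fun k : ℕ => T^[(2 * k + e) * p] (T^[p + s0] z)) ∨
      Antitone (fun k : ℕ => T^[(2 * k + e) * p] (T^[p + s0] z)) := by
    intro e
    rcases iterMono p with hgm | hga
    · have hw := seq_monoAnti hgm (fun k => T^[k * p] (T^[p + s0] z)) hwL hwstep
      rcases hw with hw | hw
      · exact Or.inl fun a b hab => hw (by omega : 2 * a + e ≤ 2 * b + e)
      · exact Or.inr fun a b hab => hw (by omega : 2 * a + e ≤ 2 * b + e)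
    · have hg2 : StrictMonoOn (fun t => T^[p] (T^[p] t)) L := fun a ha b hb hab =>
        hga (hmapsL _ hb) (hmapsL _ ha) (hga ha hb hab)
      apply seq_monoAnti hg2 (fun k => T^[(2 * k + e) * p] (T^[p + s0] z))
        (fun k => hwL (2 * k + e))
      intro k
      have e1 : T^[p] (T^[(2 * k + e) * p] (T^[p + s0] z))
          = T^[p + (2 * k + e) * p] (T^[p + s0] z) :=
        (Function.iterate_add_apply T _ _ _).symm
      have e2 : T^[p] (T^[p + (2 * k + e) * p] (T^[p + s0] z))
          = T^[p + (p + (2 * k + e) * p)] (T^[p + s0] z) :=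
        (Function.iterate_add_apply T _ _ _).symm
      show T^[(2 * (k + 1) + e) * p] (T^[p + s0] z)
          = T^[p] (T^[p] (T^[(2 * k + e) * p] (T^[p + s0] z)))
      rw [e1, e2, show p + (p + (2 * k + e) * p) = (2 * (k + 1) + e) * p from by ring]
  -- each tail sequence converges
  have hconv : ∀ i : Fin p × Fin 2,
      ∃ a, Tendsto (fun k : ℕ => T^[(i.1 : ℕ)] (T^[(2 * k + (i.2 : ℕ)) * p] (T^[p + s0] z)))
        atTop (𝓝 a) := by
    intro i
    apply exists_tendsto
    · rcases iterMono (i.1 : ℕ) with hr | hr <;> rcases hWma (i.2 : ℕ) with he | he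
      · exact Or.inl fun a b hab => hr.monotoneOn (hwL _) (hwL _) (he hab)
      · exact Or.inr fun a b hab => hr.monotoneOn (hwL _) (hwL _) (he hab)
      · exact Or.inr fun a b hab => hr.antitoneOn (hwL _) (hwL _) (he hab)
      · exact Or.inl fun a b hab => hr.antitoneOn (hwL _) (hwL _) (he hab)
    · intro k
      exact hIcc _ (hstep_iter (i.1 : ℕ) ((2 * k + (i.2 : ℕ)) * p) _ (hv _).1)
  choose A hA using hconv
  -- a countable closed set containing the whole orbit of z
  set C : Set ℝ :=
    ((fun j : ℕ => T^[j] z) '' Set.Iio (p + s0)) ∪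
      ⋃ i : Fin p × Fin 2,
        insert (A i)
          (Set.range fun k : ℕ =>
            T^[(i.1 : ℕ)] (T^[(2 * k + (i.2 : ℕ)) * p] (T^[p + s0] z))) with hC
  have hCclosed : IsClosed C := by
    rw [hC]
    apply IsClosed.union
    · exact ((Set.finite_Iio _).image _).isClosed
    · exact isClosed_iUnion_of_finite fun i => (hA i).isCompact_insert_range.isClosed
  have hCcount : C.Countable := by
    rw [hC]
    apply Set.Countable.union
    · exact ((Set.finite_Iio _).image _).countable
    · exact Set.countable_iUnion fun i => (Set.countable_range _).insert _
  have hOC : {w | ∃ n : ℕ, T^[n] z = w} ⊆ C := by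
    rintro q ⟨n, rfl⟩
    rw [hC]
    by_cases hn : n < p + s0
    · exact Or.inl ⟨n, hn, rfl⟩
    · push_neg at hn
      obtain ⟨n', rfl⟩ : ∃ n', n = n' + (p + s0) := ⟨n - (p + s0), by omega⟩
      obtain ⟨k, r, hrp, rfl⟩ : ∃ k r, r < p ∧ n' = k * p + r :=
        ⟨n' / p, n' % p, Nat.mod_lt _ hp, (Nat.div_add_mod' n' p).symm⟩
      obtain ⟨k', e, he2, rfl⟩ : ∃ k' e, e < 2 ∧ k = 2 * k' + e :=
        ⟨k / 2, k % 2, Nat.mod_lt _ (by norm_num), by omega⟩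
      refine Or.inr (Set.mem_iUnion.mpr ⟨(⟨r, hrp⟩, ⟨e, he2⟩), Or.inr ⟨k', ?_⟩⟩)
      have e1 : T^[(2 * k' + e) * p] (T^[p + s0] z)
          = T^[(2 * k' + e) * p + (p + s0)] z :=
        (Function.iterate_add_apply T _ _ _).symm
      have e2 : T^[r] (T^[(2 * k' + e) * p + (p + s0)] z)
          = T^[r + ((2 * k' + e) * p + (p + s0))] z :=
        (Function.iterate_add_apply T _ _ _).symm
      show T^[r] (T^[(2 * k' + e) * p] (T^[p + s0] z))
          = T^[(2 * k' + e) * p + r + (p + s0)] z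
      rw [e1, e2, show r + ((2 * k' + e) * p + (p + s0))
          = (2 * k' + e) * p + r + (p + s0) from by ring]
  have hsubC : Set.Icc (0 : ℝ) 1 ⊆ C :=
    fun q hq => closure_minimal hOC hCclosed (hdense hq)
  have h0 : MeasureTheory.volume C = 0 := hCcount.measure_zero _
  have h1 : MeasureTheory.volume (Set.Icc (0 : ℝ) 1) = 0 :=
    MeasureTheory.measure_mono_null hsubC h0
  rw [Real.volume_Icc] at h1
  norm_num at h1

/-- **Lemma.** If `T` is transitive, the coding map `π : X_T → Σ_m`
(characterized by `T^n(x) ∈ int(I_{(π x)_n})`) is injective on `X_T`. -/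
theorem coding_map_injective
    (m : ℕ) (T : ℝ → ℝ) (I : Fin m → Set ℝ)
    (hpm : PiecewiseMonotonic T I)
    (htrans : TransitiveOn01 T)
    (π : ℝ → FullShift m)
    (hπ : ∀ x ∈ codingDomain T I, ∀ n : ℕ, T^[n] x ∈ interior (I (π x n))) :
    Set.InjOn π (codingDomain T I) := by
  intro a ha b hb hab
  by_contra hne
  rcases lt_or_gt_of_ne hne with h | h
  · exact key m T I hpm htrans π hπ ha hb hab h
  · exact key m T I hpm htrans π hπ hb ha hab.symm h

end Paper
end

section
/- Let (ℓ_p)_{p≥1} and (γ_p)_{p≥1} be sequences of positive real numbers such that lim_{p→∞} ℓ_p / e^{γ_p ℓ_p} = 0 and γ_p ℓ_p + 1 ≤ γ_{p+1} ℓ_{p+1} for all p ∈ ℕ. Then for any constant c ≥ 0, lim_{p→∞} (cp + Σ_{j=1}^{p} ℓ_j) / e^{γ_p ℓ_p} = 0. -/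
/-!
Write `a p = γ p * ℓ p`. The growth condition gives `a p - a j ≥ p - j` for `1 ≤ j ≤ p`, hence
`a p → ∞`, and the quotient equals `∑_{j=1}^p e^{a j - a p} b j` with
`b j = (c + ℓ j) / e^{a j} → 0`. A null sequence averaged against weights dominated by the
geometric sequence `e^{-(p - j)}` tends to zero.
-/

open Filter Topology

namespace Paper

theorem tendsto_sum_smul_of_norm_le_geometric {E : Type*} [NormedAddCommGroup E]
    [NormedSpace ℝ E] [CompleteSpace E] {b : ℕ → E} (hb : Tendsto b atTop (𝓝 0))
    {r : ℝ} (hr₀ : 0 ≤ r) (hr₁ : r < 1) {s : ℕ → Finset ℕ} (hs : ∀ p, ∀ j ∈ s p, j ≤ p)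
    {w : ℕ → ℕ → ℝ} (hw : ∀ p, ∀ j ∈ s p, |w p j| ≤ r ^ (p - j)) :
    Tendsto (fun p => ∑ j ∈ s p, w p j • b j) atTop (𝓝 0) := by
  obtain ⟨C, hC⟩ : ∃ C, ∀ n, ‖b n‖ ≤ C := by
    simpa [isBounded_iff_forall_norm_le] using Metric.isBounded_range_of_tendsto b hb
  -- Reindexed by the lag `k = p - j`, the sums are dominated by `C r ^ k`: Tannery's theorem.
  let f : ℕ → ℕ → E := fun p k => if k ≤ p ∧ p - k ∈ s p then w p (p - k) • b (p - k) else 0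
  have hf_le : ∀ p k, ‖f p k‖ ≤ r ^ k * ‖b (p - k)‖ := by
    intro p k
    simp only [f]
    split_ifs with hk
    · have := hw p (p - k) hk.2
      rw [Nat.sub_sub_self hk.1] at this
      rw [norm_smul, Real.norm_eq_abs]
      gcongr
    · simp only [norm_zero]
      positivity
  have hf_lim : ∀ k, Tendsto (f · k) atTop (𝓝 0) := fun k =>
    squeeze_zero_norm (hf_le · k)
      (by simpa using ((hb.comp (tendsto_sub_atTop_nat k)).norm.const_mul (r ^ k)))
  have hf_bound : ∀ p k, ‖f p k‖ ≤ C * r ^ k := fun p k =>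
    (hf_le p k).trans (by rw [mul_comm]; gcongr; exact hC _)
  have hsum : ∀ p, ∑ j ∈ s p, w p j • b j = ∑' k, f p k := by
    intro p
    rw [tsum_eq_sum (s := (s p).image (p - ·)), Finset.sum_image]
    · refine Finset.sum_congr rfl fun j hj => ?_
      simp [f, Nat.sub_sub_self (hs p j hj), hj]
    · intro i hi j hj hij
      have := hs p i hi
      have := hs p j hj
      simp only at hij
      omega
    · intro k hk
      refine if_neg fun ⟨hkp, hmem⟩ => hk ?_
      exact Finset.mem_image.2 ⟨p - k, hmem, Nat.sub_sub_self hkp⟩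
  refine (tendsto_congr hsum).mpr ?_
  simpa using tendsto_tsum_of_dominated_convergence
    ((summable_geometric_of_lt_one hr₀ hr₁).mul_left C) hf_lim (Eventually.of_forall hf_bound)

theorem add_sub_le_of_add_one_le {f : ℕ → ℝ} {m : ℕ} (hf : ∀ p, m ≤ p → f p + 1 ≤ f (p + 1))
    {j p : ℕ} (hj : m ≤ j) (hjp : j ≤ p) : f j + (p - j : ℕ) ≤ f p := by
  induction p, hjp using Nat.le_induction with
  | base => simp
  | succ p hjp ih =>
    have := hf p (hj.trans hjp)
    rw [Nat.succ_sub hjp]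
    push_cast
    linarith

theorem tendsto_atTop_of_add_one_le {f : ℕ → ℝ} {m : ℕ}
    (hf : ∀ p, m ≤ p → f p + 1 ≤ f (p + 1)) : Tendsto f atTop atTop := by
  refine tendsto_atTop_mono' _ ?_ (tendsto_atTop_add_const_left _ (f m)
    (tendsto_natCast_atTop_atTop.comp (tendsto_sub_atTop_nat m)))
  filter_upwards [eventually_ge_atTop m] with p hp
  exact add_sub_le_of_add_one_le hf le_rfl hp

theorem sum_over_exp_tendsto_zero_general (ℓ γ : ℕ → ℝ)
    (hc : Tendsto (fun p : ℕ => ℓ p / Real.exp (γ p * ℓ p)) atTop (nhds 0))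
    (he : ∀ p, 1 ≤ p → γ p * ℓ p + 1 ≤ γ (p + 1) * ℓ (p + 1))
    (c : ℝ) :
    Tendsto (fun p : ℕ => (c * p + ∑ j ∈ Finset.Icc 1 p, ℓ j) / Real.exp (γ p * ℓ p))
      atTop (nhds 0) := by
  set a : ℕ → ℝ := fun p => γ p * ℓ p
  have hb : Tendsto (fun j => (c + ℓ j) / Real.exp (a j)) atTop (𝓝 0) := by
    have hc' : Tendsto (fun j => c / Real.exp (a j)) atTop (𝓝 0) := by
      simpa [div_eq_mul_inv] using
        (Real.tendsto_exp_atTop.comp (tendsto_atTop_of_add_one_le he)).inv_tendsto_atTop.const_mul c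
    simpa [add_div] using hc'.add hc
  have hsum : ∀ p, (c * p + ∑ j ∈ Finset.Icc 1 p, ℓ j) / Real.exp (a p)
      = ∑ j ∈ Finset.Icc 1 p, Real.exp (a j - a p) • ((c + ℓ j) / Real.exp (a j)) := by
    intro p
    have hterm : ∀ j, Real.exp (a j - a p) • ((c + ℓ j) / Real.exp (a j))
        = (c + ℓ j) / Real.exp (a p) := fun j => by
      rw [smul_eq_mul, Real.exp_sub]
      field_simp
    simp only [hterm, ← Finset.sum_div, Finset.sum_add_distrib, Finset.sum_const, Nat.card_Icc,
      add_tsub_cancel_right, nsmul_eq_mul, mul_comm]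
  refine (tendsto_congr hsum).mpr ?_
  refine tendsto_sum_smul_of_norm_le_geometric hb (Real.exp_nonneg (-1))
    (Real.exp_lt_one_iff.mpr (by norm_num)) (fun p j hj => (Finset.mem_Icc.1 hj).2) fun p j hj => ?_
  obtain ⟨h1j, hjp⟩ := Finset.mem_Icc.1 hj
  rw [abs_of_pos (Real.exp_pos _), ← Real.exp_nat_mul, Real.exp_le_exp]
  linarith [add_sub_le_of_add_one_le he h1j hjp]

/-- **Lemma (part (f) of the computational lemma).** If `(ℓ_p)`, `(γ_p)` are sequences of
positive reals with `ℓ_p / e^{γ_p ℓ_p} → 0` and `γ_p ℓ_p + 1 ≤ γ_{p+1} ℓ_{p+1}` for all `p`,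
then for any `c ≥ 0`, `(c p + ∑_{j=1}^p ℓ_j)/e^{γ_p ℓ_p} → 0`. -/
theorem sum_over_exp_tendsto_zero (ℓ γ : ℕ → ℝ)
    (hl : ∀ p, 1 ≤ p → 0 < ℓ p) (hg : ∀ p, 1 ≤ p → 0 < γ p)
    (hc : Tendsto (fun p : ℕ => ℓ p / Real.exp (γ p * ℓ p)) atTop (nhds 0))
    (he : ∀ p, 1 ≤ p → γ p * ℓ p + 1 ≤ γ (p + 1) * ℓ (p + 1))
    (c : ℝ) (hcc : 0 ≤ c) :
    Tendsto (fun p : ℕ => (c * p + ∑ j ∈ Finset.Icc 1 p, ℓ j) / Real.exp (γ p * ℓ p))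
      atTop (nhds 0) :=
  sum_over_exp_tendsto_zero_general ℓ γ hc he c

end Paper
end
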